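/- If f is bounded on X and fₙ converges I*-α-uniformly equally to f, then fₙ² converges I*-α-uniformly equally to f². -/

import Mathlib

open Filter

/-- An admissible ideal on ℕ: closed under finite unions and subsets,
and contains all singletons. -/
structure AdmissibleIdeal : Type where
  sets : Set (Set ℕ)
  union_mem : ∀ {A B : Set ℕ}, A ∈ sets → B ∈ sets → A ∪ B ∈ sets
  subset_mem : ∀ {A B : Set ℕ}, A ∈ sets → B ⊆ A → B ∈ sets
  singleton_mem : ∀ n : ℕ, {n} ∈ sets

/-- The associated filter F(I) = { ℕ \ A : A ∈ I }. -/
def AdmissibleIdeal.dualFilter (I : AdmissibleIdeal) : Set (Set ℕ) :=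
  {M | Mᶜ ∈ I.sets}

/-- (xₙ)_{n ∈ M} converges to x. -/
def ConvAlongTo {X : Type*} [MetricSpace X] (M : Set ℕ) (xs : ℕ → X) (x : X) : Prop :=
  ∀ δ > 0, ∃ N : ℕ, ∀ n ≥ N, n ∈ M → dist (xs n) x < δ

/-- (ε, M, n₀) witnesses that |{n ∈ M : |fₙ(xₙ) − g(x)| ≥ εₙ}| ≤ n₀ for every x
and every sequence (xₙ)_{n∈M} → x. -/
def WitnessUE {X : Type*} [MetricSpace X]
    (f : ℕ → X → ℝ) (g : X → ℝ) (ε : ℕ → ℝ) (M : Set ℕ) (n₀ : ℕ) : Prop :=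
  ∀ x : X, ∀ xs : ℕ → X, ConvAlongTo M xs x →
    ({n | n ∈ M ∧ ε n ≤ |f n (xs n) - g x|}).encard ≤ (n₀ : ℕ∞)

/-- I*-α-uniform equal convergence. -/
def IStarAlphaUE (I : AdmissibleIdeal) {X : Type*} [MetricSpace X]
    (f : ℕ → X → ℝ) (g : X → ℝ) : Prop :=
  ∃ ε : ℕ → ℝ, (∀ n, 0 < ε n) ∧ Tendsto ε atTop (nhds 0) ∧
    ∃ M ∈ I.dualFilter, ∃ n₀ : ℕ, WitnessUE f g ε M n₀

/-- I*-α-strong uniform equal convergence. -/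
def IStarAlphaSUE (I : AdmissibleIdeal) {X : Type*} [MetricSpace X]
    (f : ℕ → X → ℝ) (g : X → ℝ) : Prop :=
  ∃ ε : ℕ → ℝ, (∀ n, 0 < ε n) ∧ Summable ε ∧
    ∃ M ∈ I.dualFilter, ∃ n₀ : ℕ, WitnessUE f g ε M n₀

/-
The square is controlled by the first power through `a² - b² = (a - b) (a - b + 2b)`: once
`|fₙ(xₙ) - F(x)| < εₙ` and `|F| ≤ C`, also `|fₙ(xₙ)² - F(x)²| < εₙ (εₙ + 2C)`, and these new
tolerances still tend to `0`. Hence the same `M` and `n₀` witness the convergence of the squares.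
-/

theorem abs_sq_sub_sq_lt {a b ε C : ℝ} (hab : |a - b| < ε) (hb : |b| ≤ C) :
    |a ^ 2 - b ^ 2| < ε * (ε + 2 * C) := by
  have hsum : |a - b + 2 * b| ≤ ε + 2 * C := by
    calc |a - b + 2 * b| ≤ |a - b| + 2 * |b| := by
          simpa only [abs_mul, abs_two] using abs_add_le (a - b) (2 * b)
      _ ≤ ε + 2 * C := by linarith
  calc |a ^ 2 - b ^ 2| = |a - b| * |a - b + 2 * b| := by rw [← abs_mul]; ring_nf
    _ ≤ |a - b| * (ε + 2 * C) := mul_le_mul_of_nonneg_left hsum (abs_nonneg _)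
    _ < ε * (ε + 2 * C) :=
        mul_lt_mul_of_pos_right hab (by linarith [abs_nonneg (a - b), abs_nonneg b])

theorem WitnessUE.mono {X : Type*} [MetricSpace X] {f f' : ℕ → X → ℝ} {g g' : X → ℝ}
    {ε ε' : ℕ → ℝ} {M : Set ℕ} {n₀ : ℕ}
    (h : ∀ n x y, |f n y - g x| < ε n → |f' n y - g' x| < ε' n)
    (hW : WitnessUE f g ε M n₀) : WitnessUE f' g' ε' M n₀ := by
  intro x xs hxs
  refine (Set.encard_mono ?_).trans (hW x xs hxs)
  rintro n ⟨hnM, hn⟩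
  exact ⟨hnM, not_lt.mp fun hlt => (h n x (xs n) hlt).not_ge hn⟩

theorem ue_sq (I : AdmissibleIdeal) {X : Type*} [MetricSpace X]
    (f : ℕ → X → ℝ) (F : X → ℝ)
    (hFb : ∃ C : ℝ, ∀ x, |F x| ≤ C)
    (hf : IStarAlphaUE I f F) :
    IStarAlphaUE I (fun n x => (f n x) ^ 2) (fun x => (F x) ^ 2) := by
  obtain ⟨C, hC⟩ := hFb
  obtain ⟨ε, hεpos, hεlim, M, hM, n₀, hW⟩ := hf
  -- `|C|` rather than `C`: for empty `X` the bound `C` may be negative.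
  have hε'lim : Tendsto (fun n => ε n * (ε n + 2 * |C|)) atTop (nhds 0) := by
    simpa using hεlim.mul (hεlim.add_const (2 * |C|))
  refine ⟨fun n => ε n * (ε n + 2 * |C|), fun n => by have := hεpos n; positivity, hε'lim,
    M, hM, n₀, hW.mono fun n x y h => abs_sq_sub_sq_lt h ((hC x).trans (le_abs_self C))⟩
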